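/- Let k, c, d, t be positive integers, let w = lcm(c, d), and suppose N := (k·w − c)·t − d is a positive integer. Then in ℚ: k / N = 1 / ((w / c)·N) + 1 / (w·t) + 1 / ((w·t / d)·N). -/

import Mathlib

/-!
Put `a = w / c`, `b = w / d`, so `w = c a = d b`. Multiplying the identity by `w t N` turns its
three right-hand terms into `c t`, `N` and `d`, and its left-hand side into `k w t`; so it says
exactly `k w t = c t + N + d`, which is the definition of `N` read backwards.
-/

lemma Nat.mul_eq_sub_mul_sub_add_add {x y t z : ℕ} (h : 0 < (x - y) * t - z) :
    x * t = (x - y) * t - z + y * t + z := by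
  rw [Nat.sub_mul] at *
  omega

lemma div_eq_one_div_add_one_div_add_one_div {K : Type*} [Field K] {k c d t a b w N : K}
    (ha : a ≠ 0) (hb : b ≠ 0) (ht : t ≠ 0) (hw : w ≠ 0) (hN : N ≠ 0)
    (hca : c * a = w) (hdb : d * b = w) (hkey : k * w * t = N + c * t + d) :
    k / N = 1 / (a * N) + 1 / (w * t) + 1 / (b * t * N) := by
  field_simp
  linear_combination a * b * hkey + t * b * hca + a * hdb

theorem stmt_10_general (k c d t : ℕ) (hc : 0 < c) (hd : 0 < d) (ht : 0 < t)
    (w : ℕ) (hw : w = Nat.lcm c d) (N : ℕ) (hN : N = (k * w - c) * t - d)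
    (hpos : 0 < N) :
    (k : ℚ) / (N : ℚ) =
      1 / (((w / c) * N : ℕ) : ℚ) + 1 / ((w * t : ℕ) : ℚ)
        + 1 / (((w * t / d) * N : ℕ) : ℚ) := by
  have hcw : c ∣ w := hw ▸ Nat.dvd_lcm_left c d
  have hdw : d ∣ w := hw ▸ Nat.dvd_lcm_right c d
  have hw0 : 0 < w := hw ▸ Nat.lcm_pos hc hd
  have ha : 0 < w / c := Nat.div_pos (Nat.le_of_dvd hw0 hcw) hc
  have hb : 0 < w / d := Nat.div_pos (Nat.le_of_dvd hw0 hdw) hd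
  have hkey : k * w * t = N + c * t + d := hN ▸ Nat.mul_eq_sub_mul_sub_add_add (hN ▸ hpos)
  have hkeyQ : (k : ℚ) * w * t = N + c * t + d := by exact_mod_cast hkey
  rw [Nat.mul_div_right_comm hdw]
  push_cast
  refine div_eq_one_div_add_one_div_add_one_div (by positivity) (by positivity) (by positivity)
    (by positivity) (by positivity) (by exact_mod_cast Nat.mul_div_cancel' hcw)
    (by exact_mod_cast Nat.mul_div_cancel' hdw) hkeyQ

theorem stmt_10 (k c d t : ℕ) (hk : 0 < k) (hc : 0 < c) (hd : 0 < d) (ht : 0 < t)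
    (w : ℕ) (hw : w = Nat.lcm c d) (N : ℕ) (hN : N = (k * w - c) * t - d)
    (hpos : 0 < N) :
    (k : ℚ) / (N : ℚ) =
      1 / (((w / c) * N : ℕ) : ℚ) + 1 / ((w * t : ℕ) : ℚ)
        + 1 / (((w * t / d) * N : ℕ) : ℚ) :=
  stmt_10_general k c d t hc hd ht w hw N hN hpos
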